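/- arXiv:1812.04356 — 4 statements merged into one kernel-verified Lean document; each statement's English description precedes it below -/
import Mathlib

section
/- Let Ω = ℝ, φ ∈ { x ↦ x², x ↦ exp(−x) }, P = (1−p)δ_{−1} + p·δ_1 with 0 < p ≤ 1/2, k = 2, and h ∈ (1−p, 1). Then B_h = ((h+p−1)/p) ∧ (1−h). Moreover, letting Q_{γ,N} = (1−γ)P + γδ_N: (i) if (1+p)h > 1, then B_h = 1−h, and for every γ > 1−h, any sequence of optimal 2-point h-trimmed codebooks c*_2(Q_{γ,N}) for Q_{γ,N} satisfies ‖c*_2(Q_{γ,N})‖ → +∞ as N → +∞; (ii) if (1+p)h ≤ 1, then B_h = (h+p−1)/p, and for γ = B_h, the codebook (−1, N) is an optimal 2-point h-trimmed codebook for Q_{γ,N}. -/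
open MeasureTheory ENNReal Filter Topology
open scoped RealInnerProductSpace BigOperators

noncomputable section

variable {E : Type*} [NormedAddCommGroup E] [InnerProductSpace ℝ E] [CompleteSpace E]
  [MeasurableSpace E] [BorelSpace E]

/-- Bregman divergence `d_φ(x,y) = φ x − φ y − ⟪∇φ(y), x − y⟫`. -/
def breg (φ : E → ℝ) (x y : E) : ℝ :=
  φ x - φ y - ⟪gradient φ y, x - y⟫

/-- Bregman divergence from a point to a codebook: `min_j d_φ(x, c_j)`. -/
def bregCode {k : ℕ} (φ : E → ℝ) (x : E) (c : Fin k → E) : ℝ :=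
  ⨅ j, breg φ x (c j)

/-- Open Bregman ball of a codebook. -/
def bBall {k : ℕ} (φ : E → ℝ) (c : Fin k → E) (r : ℝ) : Set E :=
  {x | bregCode φ x c < r ^ 2}

/-- Closed Bregman ball of a codebook. -/
def bBallc {k : ℕ} (φ : E → ℝ) (c : Fin k → E) (r : ℝ) : Set E :=
  {x | bregCode φ x c ≤ r ^ 2}

/-- Bregman sphere of a codebook. -/
def bSphere {k : ℕ} (φ : E → ℝ) (c : Fin k → E) (r : ℝ) : Set E :=
  {x | bregCode φ x c = r ^ 2}

/-- `𝒫_h`: normalized sub-measures of `P` of total mass `h`. -/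
def subProb (P : Measure E) (h : ℝ) : Set (Measure E) :=
  {Pt | ∃ Q : Measure E, Q ≤ P ∧ Q Set.univ = ENNReal.ofReal h ∧
        Pt = (ENNReal.ofReal h)⁻¹ • Q}

/-- Distortion `R(P̃, c) = ∫ d_φ(u, c) dP̃(u)`. -/
def distor {k : ℕ} (φ : E → ℝ) (Pt : Measure E) (c : Fin k → E) : ℝ :=
  ∫ x, bregCode φ x c ∂Pt

/-- The trimming radius `r_h(c)`: smallest `r ≥ 0` with
`P(B_φ(c,r)) ≤ h ≤ P(B̄_φ(c,r))`. -/
def trimRadius {k : ℕ} (P : Measure E) (φ : E → ℝ) (h : ℝ) (c : Fin k → E) : ℝ :=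
  sInf {r : ℝ | 0 ≤ r ∧ P (bBall φ c r) ≤ ENNReal.ofReal h ∧
        ENNReal.ofReal h ≤ P (bBallc φ c r)}

/-- `𝒫_h(c)`: elements of `𝒫_h` coinciding with `P/h` on the open ball
`B_φ(c, r_h(c))` and supported in the closed ball `B̄_φ(c, r_h(c))`. -/
def subProbC {k : ℕ} (P : Measure E) (φ : E → ℝ) (h : ℝ) (c : Fin k → E) :
    Set (Measure E) :=
  {Pt | Pt ∈ subProb P h ∧
    Pt.restrict (bBall φ c (trimRadius P φ h c)) =
      ((ENNReal.ofReal h)⁻¹ • P).restrict (bBall φ c (trimRadius P φ h c)) ∧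
    Pt (bBallc φ c (trimRadius P φ h c))ᶜ = 0}

/-- The `h`-trimmed distortion `R_h(c) = h·R(P̃_c, c)` for any `P̃_c ∈ 𝒫_h(c)`
(the value does not depend on the choice of `P̃_c`). -/
def trimDistor {k : ℕ} (P : Measure E) (φ : E → ℝ) (h : ℝ) (c : Fin k → E) : ℝ :=
  sInf ((fun Pt => h * distor φ Pt c) '' subProbC P φ h c)

/-- Support of a measure. -/
def msupport (P : Measure E) : Set E := {x | ∀ U ∈ nhds x, P U ≠ 0}

/-- `F₀`: closure of the convex hull of the support of `P`. -/
def F0 (P : Measure E) : Set E := closure (convexHull ℝ (msupport P))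

/-- Optimal `j`-point `h`-trimmed distortion `R*_{j,h}`, over codebooks in `Ω`. -/
def optTrim (P : Measure E) (φ : E → ℝ) (Ω : Set E) (h : ℝ) (j : ℕ) : ℝ :=
  sInf {r : ℝ | ∃ c : Fin j → E, (∀ i, c i ∈ Ω) ∧ r = trimDistor P φ h c}

/-- Distance between codebooks up to relabelling. -/
def Dcode {k : ℕ} (c c' : Fin k → E) : ℝ :=
  ⨅ σ : Equiv.Perm (Fin k), ⨆ i, ‖c i - c' (σ i)‖

/-- Empirical measure of a finite sample. -/
def empMeas {n : ℕ} (X : Fin n → E) : Measure E :=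
  (n : ℝ≥0∞)⁻¹ • ∑ i, Measure.dirac (X i)

/-- Bregman–Voronoi cell `V_i(c)`. -/
def vorCell {k : ℕ} (φ : E → ℝ) (c : Fin k → E) (i : Fin k) : Set E :=
  {x | ∀ j, j ≠ i → breg φ x (c i) ≤ breg φ x (c j)}

/-- Discernability factor `B_h` (for `k`-point quantization over `Ω`). -/
def discern (P : Measure E) (φ : E → ℝ) (Ω : Set E) (h : ℝ) (k : ℕ) : ℝ :=
  sSup {b : ℝ | 0 ≤ b ∧ b ≤ min h (1 - h) ∧
    ∀ j, 2 ≤ j → j ≤ k →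
      0 < optTrim P φ Ω ((h - b) / (1 - b)) (j - 1) - optTrim P φ Ω (h / (1 - b)) j}


/-- The corrupted distribution `Q_{γ,N} = (1−γ)P + γ·δ_N`. -/
def Qmix (P : Measure ℝ) (γ N : ℝ) : Measure ℝ :=
  ENNReal.ofReal (1 - γ) • P + ENNReal.ofReal γ • Measure.dirac N

end

/-!
For a differentiable strictly convex `φ` on `ℝ`, the three-point identity
`d(x,z) = d(x,y) + d(y,z) + (φ'(y) - φ'(z))(x - y)` shows that `d_φ(x, y)` is positive off the
diagonal, grows as `y` moves away from `x`, and tends to `+∞` as `x → +∞`.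

For `P = (1-p)δ₋₁ + pδ₁` the 2-point codebook `(-1, 1)` always has zero trimmed distortion, and so
has the 1-point codebook `(-1)` at any level `h' ≤ 1 - p`. For `h' > 1 - p`, every sub-measure of
`P` of mass `h'` keeps mass at least `h' - (1-p)` on each atom, so `R*_{1,h'} > 0`. As
`(h-b)/(1-b) > 1-p` exactly when `b < (h+p-1)/p`, this gives `B_h`.

For `Q_{γ,N}` every sub-measure of mass `h` keeps mass at least `h - (1-γ)⁺` at `N`, while the
codebook `(-1, N)` costs at most `h · d_φ(1,-1)`; so an optimal codebook `c` has `d_φ(N, c)`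
bounded and must escape to infinity. When `γ = (h+p-1)/p` the atoms `-1` and `N` carry mass
exactly `h`, so `(-1, N)` has zero trimmed distortion.
-/

section Bregman

variable {E : Type*} [NormedAddCommGroup E] [InnerProductSpace ℝ E] [CompleteSpace E]
  {φ : E → ℝ}

theorem breg_self (φ : E → ℝ) (x : E) : breg φ x x = 0 := by
  simp [breg]

theorem bregCode_nonneg (hnn : ∀ x y, 0 ≤ breg φ x y) {k : ℕ} (x : E) (c : Fin k → E) :
    0 ≤ bregCode φ x c :=
  Real.iInf_nonneg fun _ => hnn _ _

theorem bregCode_le {k : ℕ} (x : E) (c : Fin k → E) (j : Fin k) :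
    bregCode φ x c ≤ breg φ x (c j) :=
  ciInf_le (Set.finite_range _).bddBelow j

theorem bregCode_fin_one (x : E) (c : Fin 1 → E) : bregCode φ x c = breg φ x (c 0) :=
  ciInf_unique

theorem bregCode_eq_zero_of_mem_range (hnn : ∀ x y, 0 ≤ breg φ x y) {k : ℕ} {c : Fin k → E}
    {x : E} (hx : x ∈ Set.range c) : bregCode φ x c = 0 := by
  obtain ⟨j, rfl⟩ := hx
  exact le_antisymm (breg_self φ (c j) ▸ bregCode_le _ c j) (bregCode_nonneg hnn _ c)

theorem measurable_bregCode [MeasurableSpace E] [OpensMeasurableSpace E] (hφm : Measurable φ)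
    {k : ℕ} (c : Fin k → E) :
    Measurable fun x => bregCode φ x c :=
  Measurable.iInf fun _ => (hφm.sub_const _).sub
    (continuous_const.inner (continuous_id.sub continuous_const)).measurable

end Bregman

section RealBregman

variable {φ : ℝ → ℝ}

theorem breg_real (φ : ℝ → ℝ) (x y : ℝ) : breg φ x y = φ x - φ y - deriv φ y * (x - y) := by
  rw [breg, gradient_eq_deriv', real_inner_eq_re_inner]
  simp [mul_comm]

theorem breg_three_point (φ : ℝ → ℝ) (x y z : ℝ) :
    breg φ x z = breg φ x y + breg φ y z + (deriv φ y - deriv φ z) * (x - y) := by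
  simp only [breg_real]
  ring

theorem strictConvexOn_exp_neg : StrictConvexOn ℝ Set.univ fun x => Real.exp (-x) :=
  ⟨convex_univ, fun x _ y _ hxy a b ha hb hab => by
    simpa [smul_eq_mul, neg_add, add_comm] using
      strictConvexOn_exp.2 (Set.mem_univ (-x)) (Set.mem_univ (-y)) (neg_injective.ne hxy) ha hb hab⟩

theorem breg_pos (hφc : StrictConvexOn ℝ Set.univ φ) (hφd : Differentiable ℝ φ)
    {x y : ℝ} (hxy : x ≠ y) : 0 < breg φ x y := by
  rw [breg_real]
  rcases hxy.lt_or_gt with hlt | hlt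
  · have := hφc.slope_lt_deriv trivial trivial hlt (hφd y)
    rw [slope_def_field, div_lt_iff₀ (sub_pos.2 hlt)] at this
    nlinarith
  · have := hφc.deriv_lt_slope trivial trivial hlt (hφd y)
    rw [slope_def_field, lt_div_iff₀ (sub_pos.2 hlt)] at this
    nlinarith

theorem breg_nonneg (hφc : StrictConvexOn ℝ Set.univ φ) (hφd : Differentiable ℝ φ)
    (x y : ℝ) : 0 ≤ breg φ x y := by
  rcases eq_or_ne x y with rfl | hxy
  · exact (breg_self φ x).ge
  · exact (breg_pos hφc hφd hxy).le

theorem breg_le_breg_of_mem_uIcc (hφc : StrictConvexOn ℝ Set.univ φ) (hφd : Differentiable ℝ φ)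
    {x y z : ℝ} (hy : y ∈ Set.uIcc x z) :
    breg φ x y ≤ breg φ x z := by
  have hmono := (hφc.strictMonoOn_deriv fun x _ => hφd x).monotoneOn
  have hcross : 0 ≤ (deriv φ y - deriv φ z) * (x - y) := by
    rcases Set.mem_uIcc.1 hy with ⟨hxy, hyz⟩ | ⟨hzy, hyx⟩
    · exact mul_nonneg_of_nonpos_of_nonpos
        (sub_nonpos.2 (hmono trivial trivial hyz)) (sub_nonpos.2 hxy)
    · exact mul_nonneg (sub_nonneg.2 (hmono trivial trivial hzy)) (sub_nonneg.2 hyx)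
  rw [breg_three_point φ x y z]
  linarith [breg_nonneg hφc hφd y z]

theorem tendsto_breg_atTop (hφc : StrictConvexOn ℝ Set.univ φ) (hφd : Differentiable ℝ φ)
    (y : ℝ) : Tendsto (fun x => breg φ x y) atTop atTop := by
  have hslope : 0 < deriv φ (y + 1) - deriv φ y :=
    sub_pos.2 (hφc.strictMonoOn_deriv (fun x _ => hφd x) trivial trivial (lt_add_one y))
  refine tendsto_atTop_mono' _ ((eventually_ge_atTop (y + 1)).mono fun x hx => ?_)
    ((tendsto_id.atTop_add (tendsto_const_nhds (x := -(y + 1)))).const_mul_atTop hslope)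
  dsimp only [id]
  rw [breg_three_point φ x (y + 1) y]
  linarith [breg_nonneg hφc hφd x (y + 1), breg_nonneg hφc hφd (y + 1) y]

theorem tendsto_iSup_norm_atTop_of_bregCode_le (hφc : StrictConvexOn ℝ Set.univ φ)
    (hφd : Differentiable ℝ φ) {k : ℕ} [NeZero k] (cb : ℝ → Fin k → ℝ) (K : ℝ)
    (hK : ∀ N, bregCode φ N (cb N) ≤ K) : Tendsto (fun N => ⨆ j, ‖cb N j‖) atTop atTop := by
  refine tendsto_atTop.2 fun R => ?_
  filter_upwards [eventually_ge_atTop R, (tendsto_breg_atTop hφc hφd R).eventually_gt_atTop K]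
    with N hRN hfar
  by_contra! hlt
  have hcb : ∀ j, cb N j ≤ R := fun j =>
    (le_abs_self _).trans ((le_ciSup (Set.finite_range fun j => ‖cb N j‖).bddAbove j).trans hlt.le)
  have : breg φ N R ≤ bregCode φ N (cb N) := le_ciInf fun j =>
    breg_le_breg_of_mem_uIcc hφc hφd (Set.mem_uIcc.2 (Or.inr ⟨hcb j, hRN⟩))
  linarith [hK N]

end RealBregman

section Measure

variable {α : Type*} [MeasurableSpace α] {μ : Measure α}

theorem exists_quantile [IsFiniteMeasure μ] {g : α → ℝ} (hg : Measurable g) (hg0 : 0 ≤ g)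
    {a : ℝ≥0∞} (ha : 0 < a) (hU : ∃ t, a ≤ μ {x | g x ≤ t}) :
    ∃ q, 0 ≤ q ∧ μ {x | g x < q} ≤ a ∧ a ≤ μ {x | g x ≤ q} ∧
      ∀ t, a ≤ μ {x | g x ≤ t} → q ≤ t := by
  set U := {t | a ≤ μ {x | g x ≤ t}}
  have hU0 : ∀ t ∈ U, 0 ≤ t := fun t ht => by
    by_contra! ht0
    have hempty : {x | g x ≤ t} = ∅ :=
      Set.eq_empty_of_forall_notMem fun x hx => (hg0 x).not_gt (lt_of_le_of_lt hx ht0)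
    exact ha.ne' (le_antisymm (by simpa [U, hempty] using ht) bot_le)
  have hbdd : BddBelow U := ⟨0, hU0⟩
  set q := sInf U
  refine ⟨q, le_csInf hU hU0, ?_, ?_, fun t ht => csInf_le hbdd ht⟩
  · have hunion : {x | g x < q} = ⋃ n : ℕ, {x | g x ≤ q - 1 / (n + 1)} := by
      ext x
      simp only [Set.mem_ofPred_eq, Set.mem_iUnion]
      refine ⟨fun hx => ?_, fun ⟨n, hn⟩ => hn.trans_lt (sub_lt_self _ Nat.one_div_pos_of_nat)⟩
      obtain ⟨n, hn⟩ := exists_nat_one_div_lt (sub_pos.2 hx)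
      exact ⟨n, by linarith⟩
    have hmono : Monotone fun n : ℕ => {x | g x ≤ q - 1 / (n + 1)} := fun m n hmn x hx =>
      hx.trans (sub_le_sub_left (Nat.one_div_le_one_div hmn) q)
    rw [hunion, hmono.measure_iUnion]
    refine iSup_le fun n => ?_
    have hn : q - 1 / (n + 1) ∉ U := notMem_of_lt_csInf (sub_lt_self q Nat.one_div_pos_of_nat) hbdd
    exact (not_le.1 hn).le
  · have hinter : {x | g x ≤ q} = ⋂ n : ℕ, {x | g x ≤ q + 1 / (n + 1)} := by
      ext x
      simp only [Set.mem_ofPred_eq, Set.mem_iInter]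
      refine ⟨fun hx n => hx.trans (le_add_of_nonneg_right Nat.one_div_pos_of_nat.le),
        fun hx => ?_⟩
      by_contra! hlt
      obtain ⟨n, hn⟩ := exists_nat_one_div_lt (sub_pos.2 hlt)
      linarith [hx n]
    have hanti : Antitone fun n : ℕ => {x | g x ≤ q + 1 / (n + 1)} := fun m n hmn x hx =>
      hx.trans ((add_le_add_iff_left q).2 (Nat.one_div_le_one_div hmn))
    rw [hinter, hanti.measure_iInter (fun _ => (hg measurableSet_Iic).nullMeasurableSet)
      ⟨0, measure_ne_top _ _⟩]
    refine le_iInf fun n => ?_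
    obtain ⟨t, ht, htq⟩ := exists_lt_of_csInf_lt hU (lt_add_of_pos_right q Nat.one_div_pos_of_nat)
    exact le_trans (b := μ {x | g x ≤ t}) ht (measure_mono fun x hx => le_trans hx htq.le)

theorem exists_le_restrict_eq_of_measure_le [IsFiniteMeasure μ] {A C : Set α}
    (hA : MeasurableSet A) (hC : MeasurableSet C) (hAC : A ⊆ C) {a : ℝ≥0∞}
    (hμA : μ A ≤ a) (hμC : a ≤ μ C) :
    ∃ Q ≤ μ, Q Set.univ = a ∧ Q.restrict A = μ.restrict A ∧ Q Cᶜ = 0 := by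
  set t := (a - μ A) / μ (C \ A)
  have hCA : μ A + μ (C \ A) = μ C := by
    rw [measure_add_sdiff hA.nullMeasurableSet, Set.union_eq_self_of_subset_left hAC]
  have ht : t * μ (C \ A) = a - μ A := by
    rcases eq_or_ne (μ (C \ A)) 0 with h0 | h0
    · have : a - μ A = 0 := tsub_eq_zero_of_le (by simpa [h0] using hμC.trans_eq hCA.symm)
      simp [t, this, h0]
    · exact ENNReal.div_mul_cancel h0 (measure_ne_top _ _)
  have ht1 : t ≤ 1 := by
    refine ENNReal.div_le_of_le_mul ?_
    rw [one_mul, tsub_le_iff_left, hCA]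
    exact hμC
  refine ⟨μ.restrict A + t • μ.restrict (C \ A), ?_, ?_, ?_, ?_⟩
  · refine Measure.le_iff.2 fun s hs => ?_
    simp only [Measure.add_apply, Measure.smul_apply, Measure.restrict_apply hs, smul_eq_mul]
    calc μ (s ∩ A) + t * μ (s ∩ (C \ A)) ≤ μ (s ∩ A) + μ (s ∩ (C \ A)) := by
          gcongr; exact mul_le_of_le_one_left' ht1
      _ = μ (s ∩ A ∪ s ∩ (C \ A)) := (measure_union
          (Set.disjoint_sdiff_right.mono Set.inter_subset_right Set.inter_subset_right)
          (hs.inter (hC.diff hA))).symm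
      _ ≤ μ s := measure_mono (Set.union_subset Set.inter_subset_left Set.inter_subset_left)
  · simp [ht, add_tsub_cancel_of_le hμA]
  · simp [Measure.restrict_add, Measure.restrict_restrict hA]
  · have hA' : Cᶜ ∩ A = ∅ := (Set.disjoint_compl_left_iff_subset.2 hAC).inter_eq
    have hCA' : Cᶜ ∩ (C \ A) = ∅ := (Set.disjoint_compl_left_iff_subset.2 Set.sdiff_subset).inter_eq
    simp [Measure.restrict_apply hC.compl, hA', hCA']

theorem sub_measureReal_compl_le {Q : Measure α} [IsFiniteMeasure μ] (hQμ : Q ≤ μ) {s : Set α}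
    (hs : MeasurableSet s) : Q.real Set.univ - μ.real sᶜ ≤ Q.real s := by
  have := isFiniteMeasure_of_le μ hQμ
  rw [← measureReal_add_measureReal_compl (μ := Q) hs]
  have : Q.real sᶜ ≤ μ.real sᶜ := ENNReal.toReal_mono (measure_ne_top _ _) (hQμ sᶜ)
  linarith

theorem measureReal_singleton_mul_le_integral [MeasurableSingletonClass α] {f : α → ℝ}
    (hf0 : 0 ≤ f) (hfi : Integrable f μ) (a : α) : μ.real {a} * f a ≤ ∫ x, f x ∂μ := by
  rw [← smul_eq_mul, ← integral_singleton]
  exact setIntegral_le_integral hfi (ae_of_all _ hf0)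

theorem exists_le_integral_eq_of_mem_subProb {P Pt : Measure α} {h : ℝ} (h0 : 0 < h)
    (hPt : Pt ∈ subProb P h) (g : α → ℝ) :
    ∃ Q ≤ P, Q Set.univ = ENNReal.ofReal h ∧ h * ∫ x, g x ∂Pt = ∫ x, g x ∂Q := by
  obtain ⟨Q, hQP, hQ, rfl⟩ := hPt
  refine ⟨Q, hQP, hQ, ?_⟩
  rw [integral_smul_measure, ENNReal.toReal_inv, ENNReal.toReal_ofReal h0.le, smul_eq_mul,
    ← mul_assoc, mul_inv_cancel₀ h0.ne', one_mul]

end Measure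

section Trimming

variable {E : Type*} [NormedAddCommGroup E] [InnerProductSpace ℝ E] [CompleteSpace E]
  [MeasurableSpace E] {P : Measure E} {φ : E → ℝ} {h : ℝ} {k : ℕ} {c : Fin k → E}

theorem trimRadius_spec [IsFiniteMeasure P] (hnn : ∀ x y, 0 ≤ breg φ x y)
    (hf : Measurable fun x => bregCode φ x c) (h0 : 0 < h)
    (hball : ∃ r, ENNReal.ofReal h ≤ P (bBallc φ c r)) :
    P (bBall φ c (trimRadius P φ h c)) ≤ ENNReal.ofReal h ∧
      ENNReal.ofReal h ≤ P (bBallc φ c (trimRadius P φ h c)) := by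
  obtain ⟨r, hr⟩ := hball
  obtain ⟨q, hq0, hlt, hle, hleast⟩ := exists_quantile hf (fun x => bregCode_nonneg hnn x c)
    (ENNReal.ofReal_pos.2 h0) ⟨r ^ 2, hr⟩
  have hopen : bBall φ c √q = {x | bregCode φ x c < q} := by simp [bBall, Real.sq_sqrt hq0]
  have hclosed : bBallc φ c √q = {x | bregCode φ x c ≤ q} := by simp [bBallc, Real.sq_sqrt hq0]
  -- the trimming radius is the square root of the `h`-quantile of `d_φ(·, c)` under `P`
  have hradius : trimRadius P φ h c = √q := by
    refine IsLeast.csInf_eq ⟨⟨Real.sqrt_nonneg q, hopen ▸ hlt, hclosed ▸ hle⟩, ?_⟩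
    rintro r ⟨hr0, -, hr⟩
    simpa [Real.sqrt_sq hr0] using Real.sqrt_le_sqrt (hleast _ hr)
  rw [hradius, hopen, hclosed]
  exact ⟨hlt, hle⟩

theorem exists_measure_univ_le_bBallc {S : Set E} (hS : S.Finite) (hPS : ∀ᵐ x ∂P, x ∈ S) :
    ∃ r, P Set.univ ≤ P (bBallc φ c r) := by
  obtain ⟨M, hM⟩ := (hS.image (bregCode φ · c)).bddAbove
  refine ⟨√|M|, measure_mono_ae (hPS.mono fun x hx _ => ?_)⟩
  change bregCode φ x c ≤ √|M| ^ 2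
  rw [Real.sq_sqrt (abs_nonneg M)]
  exact (hM ⟨x, hx, rfl⟩).trans (le_abs_self M)

theorem subProbC_nonempty [IsFiniteMeasure P] (hnn : ∀ x y, 0 ≤ breg φ x y)
    (hf : Measurable fun x => bregCode φ x c) (h0 : 0 < h)
    (hball : ∃ r, ENNReal.ofReal h ≤ P (bBallc φ c r)) : (subProbC P φ h c).Nonempty := by
  obtain ⟨hB, hBc⟩ := trimRadius_spec hnn hf h0 hball
  obtain ⟨Q, hQP, hQ, hQA, hQC⟩ := exists_le_restrict_eq_of_measure_le
    (A := bBall φ c (trimRadius P φ h c)) (C := bBallc φ c (trimRadius P φ h c))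
    (hf measurableSet_Iio) (hf measurableSet_Iic)
    (fun x hx => show bregCode φ x c ≤ _ from le_of_lt hx) hB hBc
  exact ⟨(ENNReal.ofReal h)⁻¹ • Q, ⟨Q, hQP, hQ, rfl⟩,
    by rw [Measure.restrict_smul, hQA, Measure.restrict_smul], by simp [hQC]⟩

theorem mul_distor_nonneg (hnn : ∀ x y, 0 ≤ breg φ x y) (h0 : 0 ≤ h) (Pt : Measure E) :
    0 ≤ h * distor φ Pt c :=
  mul_nonneg h0 (integral_nonneg fun x => bregCode_nonneg hnn x c)

theorem trimDistor_nonneg (hnn : ∀ x y, 0 ≤ breg φ x y) (h0 : 0 ≤ h) :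
    0 ≤ trimDistor P φ h c :=
  Real.sInf_nonneg <| by
    rintro _ ⟨Pt, -, rfl⟩
    exact mul_distor_nonneg hnn h0 Pt

theorem trimDistor_le_of_forall (hnn : ∀ x y, 0 ≤ breg φ x y) (h0 : 0 ≤ h) {K : ℝ} (hK : 0 ≤ K)
    (hall : ∀ Pt ∈ subProbC P φ h c, h * distor φ Pt c ≤ K) : trimDistor P φ h c ≤ K := by
  rcases (subProbC P φ h c).eq_empty_or_nonempty with he | ⟨Pt, hPt⟩
  · simpa [trimDistor, he] using hK
  · refine (csInf_le ⟨0, ?_⟩ (Set.mem_image_of_mem _ hPt)).trans (hall Pt hPt)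
    rintro _ ⟨Pt, -, rfl⟩
    exact mul_distor_nonneg hnn h0 Pt

theorem le_trimDistor (h0 : 0 < h) (hne : (subProbC P φ h c).Nonempty) {ε : ℝ}
    (hε : ∀ Q ≤ P, Q Set.univ = ENNReal.ofReal h → ε ≤ ∫ x, bregCode φ x c ∂Q) :
    ε ≤ trimDistor P φ h c := by
  refine le_csInf (hne.image _) ?_
  rintro _ ⟨Pt, hPt, rfl⟩
  obtain ⟨Q, hQP, hQ, heq⟩ := exists_le_integral_eq_of_mem_subProb h0 hPt.1 (bregCode φ · c)
  dsimp only
  rw [distor, heq]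
  exact hε Q hQP hQ

theorem trimDistor_le_mul (hnn : ∀ x y, 0 ≤ breg φ x y) (h0 : 0 < h) {K : ℝ} (hK : 0 ≤ K)
    (hbound : ∀ᵐ x ∂P, bregCode φ x c ≤ K) : trimDistor P φ h c ≤ h * K := by
  refine trimDistor_le_of_forall hnn h0.le (mul_nonneg h0.le hK) fun Pt hPt => ?_
  obtain ⟨Q, hQP, hQ, heq⟩ := exists_le_integral_eq_of_mem_subProb h0 hPt.1 (bregCode φ · c)
  have : IsFiniteMeasure Q := ⟨hQ ▸ ENNReal.ofReal_lt_top⟩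
  rw [distor, heq]
  calc ∫ x, bregCode φ x c ∂Q ≤ ∫ _, K ∂Q :=
        integral_mono_of_nonneg (ae_of_all _ fun x => bregCode_nonneg hnn x c) (integrable_const K)
          ((Measure.absolutelyContinuous_of_le hQP).ae_le hbound)
    _ = h * K := by simp [measureReal_def, hQ, h0.le]

theorem trimDistor_eq_zero_of_le_measure_range (hnn : ∀ x y, 0 ≤ breg φ x y) (h0 : 0 ≤ h)
    (hrange : ENNReal.ofReal h ≤ P (Set.range c)) : trimDistor P φ h c = 0 := by
  have hzero : bBall φ c 0 = ∅ := Set.eq_empty_of_forall_notMem fun x hx =>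
    (bregCode_nonneg hnn x c).not_gt (by simpa [bBall] using hx)
  have hradius : trimRadius P φ h c = 0 := by
    refine IsLeast.csInf_eq ⟨⟨le_rfl, by simp [hzero], hrange.trans (measure_mono ?_)⟩,
      fun r hr => hr.1⟩
    intro x hx
    simp [bBallc, bregCode_eq_zero_of_mem_range hnn hx]
  refine le_antisymm (trimDistor_le_of_forall hnn h0 le_rfl fun Pt hPt => ?_)
    (trimDistor_nonneg hnn h0)
  have hae : ∀ᵐ x ∂Pt, x ∈ bBallc φ c 0 := ae_iff.2 (hradius ▸ hPt.2.2)
  rw [distor, integral_eq_zero_of_ae (hae.mono fun x hx => ?_), mul_zero]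
  exact le_antisymm (by simpa [bBallc] using hx) (bregCode_nonneg hnn x c)

theorem optTrim_nonneg (hnn : ∀ x y, 0 ≤ breg φ x y) (h0 : 0 ≤ h) (Ω : Set E) (j : ℕ) :
    0 ≤ optTrim P φ Ω h j :=
  Real.sInf_nonneg <| by
    rintro _ ⟨c, -, rfl⟩
    exact trimDistor_nonneg hnn h0

theorem optTrim_univ_le_trimDistor (hnn : ∀ x y, 0 ≤ breg φ x y) (h0 : 0 ≤ h) {j : ℕ}
    (c : Fin j → E) : optTrim P φ Set.univ h j ≤ trimDistor P φ h c := by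
  refine csInf_le ⟨0, ?_⟩ ⟨c, fun _ => trivial, rfl⟩
  rintro _ ⟨c', -, rfl⟩
  exact trimDistor_nonneg hnn h0

theorem le_optTrim_univ {j : ℕ} {ε : ℝ} (hall : ∀ c : Fin j → E, ε ≤ trimDistor P φ h c) :
    ε ≤ optTrim P φ Set.univ h j := by
  refine le_csInf ⟨_, 0, fun _ => trivial, rfl⟩ ?_
  rintro _ ⟨c, -, rfl⟩
  exact hall c

end Trimming

noncomputable def twoPoint (p : ℝ) : Measure ℝ :=
  ENNReal.ofReal (1 - p) • Measure.dirac (-1 : ℝ) + ENNReal.ofReal p • Measure.dirac (1 : ℝ)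

section TwoPoint

variable {p : ℝ}

theorem twoPoint_apply (p : ℝ) (s : Set ℝ) :
    twoPoint p s =
      ENNReal.ofReal (1 - p) * s.indicator 1 (-1) + ENNReal.ofReal p * s.indicator 1 1 := by
  simp [twoPoint, Measure.dirac_apply]

instance (p : ℝ) : IsFiniteMeasure (twoPoint p) :=
  ⟨by simp [twoPoint_apply, Set.indicator]⟩

theorem twoPoint_singleton_neg_one (p : ℝ) : twoPoint p {-1} = ENNReal.ofReal (1 - p) := by
  norm_num [twoPoint_apply]

theorem twoPoint_univ (hp0 : 0 ≤ p) (hp1 : p ≤ 1) : twoPoint p Set.univ = 1 := by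
  rw [twoPoint_apply]
  simp [← ENNReal.ofReal_add (sub_nonneg.2 hp1) hp0]

theorem twoPoint_real_compl_neg_one (hp0 : 0 ≤ p) : (twoPoint p).real {-1}ᶜ = p := by
  norm_num [measureReal_def, twoPoint_apply, hp0]

theorem twoPoint_real_compl_one (hp1 : p ≤ 1) : (twoPoint p).real {1}ᶜ = 1 - p := by
  norm_num [measureReal_def, twoPoint_apply, hp1]

theorem ae_twoPoint (p : ℝ) : ∀ᵐ x ∂twoPoint p, x = -1 ∨ x = 1 :=
  ae_add_measure_iff.2 ⟨Measure.ae_smul_measure (by simp [ae_dirac_eq]) _,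
    Measure.ae_smul_measure (by simp [ae_dirac_eq]) _⟩

theorem integrable_twoPoint (p : ℝ) (f : ℝ → ℝ) : Integrable f (twoPoint p) :=
  ((integrable_dirac enorm_lt_top).smul_measure ENNReal.ofReal_ne_top).add_measure
    ((integrable_dirac enorm_lt_top).smul_measure ENNReal.ofReal_ne_top)

theorem Qmix_apply (P : Measure ℝ) (γ N : ℝ) (s : Set ℝ) :
    Qmix P γ N s = ENNReal.ofReal (1 - γ) * P s + ENNReal.ofReal γ * s.indicator 1 N := by
  simp [Qmix, Measure.dirac_apply]

instance {P : Measure ℝ} [IsFiniteMeasure P] (γ N : ℝ) : IsFiniteMeasure (Qmix P γ N) :=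
  ⟨by simp [Qmix_apply, ENNReal.mul_lt_top]⟩

theorem integrable_Qmix {P : Measure ℝ} {f : ℝ → ℝ} (hf : Integrable f P) (γ N : ℝ) :
    Integrable f (Qmix P γ N) :=
  (hf.smul_measure ENNReal.ofReal_ne_top).add_measure
    ((integrable_dirac enorm_lt_top).smul_measure ENNReal.ofReal_ne_top)

theorem ae_Qmix {P : Measure ℝ} {q : ℝ → Prop} (hP : ∀ᵐ x ∂P, q x) {N : ℝ} (hN : q N) (γ : ℝ) :
    ∀ᵐ x ∂Qmix P γ N, q x :=
  ae_add_measure_iff.2 ⟨Measure.ae_smul_measure hP _,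
    Measure.ae_smul_measure (by simpa [ae_dirac_eq] using hN) _⟩

end TwoPoint

section TwoPointQuantization

variable {φ : ℝ → ℝ} {p : ℝ}

theorem optTrim_twoPoint_one_eq_zero (hnn : ∀ x y, 0 ≤ breg φ x y) {h : ℝ} (h0 : 0 ≤ h)
    (hh : h ≤ 1 - p) : optTrim (twoPoint p) φ Set.univ h 1 = 0 := by
  refine le_antisymm ((optTrim_univ_le_trimDistor hnn h0 ![-1]).trans_eq
    (trimDistor_eq_zero_of_le_measure_range hnn h0 ?_)) (optTrim_nonneg hnn h0 _ _)
  simpa [twoPoint_singleton_neg_one] using ENNReal.ofReal_le_ofReal hh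

theorem optTrim_twoPoint_two_eq_zero (hnn : ∀ x y, 0 ≤ breg φ x y) (hp0 : 0 ≤ p) (hp1 : p ≤ 1)
    {h : ℝ} (h0 : 0 ≤ h) (hh : h ≤ 1) : optTrim (twoPoint p) φ Set.univ h 2 = 0 := by
  refine le_antisymm ((optTrim_univ_le_trimDistor hnn h0 ![-1, 1]).trans_eq
    (trimDistor_eq_zero_of_le_measure_range hnn h0 ?_)) (optTrim_nonneg hnn h0 _ _)
  refine (ENNReal.ofReal_le_one.2 hh).trans ((twoPoint_univ hp0 hp1).symm.trans_le
    (measure_mono_ae ((ae_twoPoint p).mono fun x hx _ => ?_)))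
  rcases hx with rfl | rfl
  exacts [⟨0, rfl⟩, ⟨1, rfl⟩]

theorem optTrim_twoPoint_one_pos (hφc : StrictConvexOn ℝ Set.univ φ) (hφd : Differentiable ℝ φ)
    (hp : p ≤ 1 / 2) {h : ℝ} (hh1 : 1 - p < h) (hh2 : h ≤ 1) :
    0 < optTrim (twoPoint p) φ Set.univ h 1 := by
  have hp0 : 0 ≤ p := by linarith
  have h0 : 0 < h := by linarith
  set ε := h - (1 - p)
  set m := min (breg φ (-1) 0) (breg φ 1 0)
  have hm : 0 < m := lt_min (breg_pos hφc hφd (by norm_num)) (breg_pos hφc hφd (by norm_num))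
  refine (mul_pos (sub_pos.2 hh1) hm).trans_le (le_optTrim_univ fun c => ?_)
  have hball := exists_measure_univ_le_bBallc (φ := φ) (c := c) (Set.toFinite {-1, 1})
    (ae_twoPoint p)
  rw [twoPoint_univ hp0 (by linarith)] at hball
  refine le_trimDistor h0 (subProbC_nonempty (breg_nonneg hφc hφd)
    (measurable_bregCode hφd.continuous.measurable c) h0
    (hball.imp fun r hr => (ENNReal.ofReal_le_one.2 hh2).trans hr)) fun Q hQP hQ => ?_
  have hQuniv : Q.real Set.univ = h := by simp [measureReal_def, hQ, h0.le]
  have hmass_neg : ε ≤ Q.real {-1} := by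
    have := sub_measureReal_compl_le hQP (measurableSet_singleton (-1))
    rw [hQuniv, twoPoint_real_compl_neg_one hp0] at this
    linarith
  have hmass_pos : ε ≤ Q.real {1} := by
    have := sub_measureReal_compl_le hQP (measurableSet_singleton 1)
    rw [hQuniv, twoPoint_real_compl_one (by linarith)] at this
    linarith
  have hint : Integrable (bregCode φ · c) Q := (integrable_twoPoint p _).mono_measure hQP
  have hcode : 0 ≤ fun x => bregCode φ x c := fun x => bregCode_nonneg (breg_nonneg hφc hφd) x c
  -- one of the two atoms lies on the far side of `0` from the codepoint
  rcases le_total 0 (c 0) with hc | hc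
  · have hfar : m ≤ bregCode φ (-1) c := (min_le_left _ _).trans <| (bregCode_fin_one _ c).symm ▸
      breg_le_breg_of_mem_uIcc hφc hφd (Set.mem_uIcc.2 (Or.inl ⟨by norm_num, hc⟩))
    calc ε * m ≤ Q.real {-1} * bregCode φ (-1) c :=
          mul_le_mul hmass_neg hfar hm.le measureReal_nonneg
      _ ≤ _ := measureReal_singleton_mul_le_integral hcode hint (-1)
  · have hfar : m ≤ bregCode φ 1 c := (min_le_right _ _).trans <| (bregCode_fin_one _ c).symm ▸
      breg_le_breg_of_mem_uIcc hφc hφd (Set.mem_uIcc.2 (Or.inr ⟨hc, by norm_num⟩))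
    calc ε * m ≤ Q.real {1} * bregCode φ 1 c :=
          mul_le_mul hmass_pos hfar hm.le measureReal_nonneg
      _ ≤ _ := measureReal_singleton_mul_le_integral hcode hint 1

theorem sSup_eq_of_Ico_subset {D : Set ℝ} {M : ℝ} (hM : 0 < M) (hlow : Set.Ico 0 M ⊆ D)
    (hup : ∀ b ∈ D, b ≤ M) : sSup D = M :=
  csSup_eq_of_forall_le_of_forall_lt_exists_gt ⟨0, hlow ⟨le_rfl, hM⟩⟩ hup fun w hw =>
    ⟨(max w 0 + M) / 2, hlow ⟨by positivity, by linarith [max_lt hw hM]⟩,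
      by linarith [le_max_left w 0, max_lt hw hM]⟩

theorem discern_twoPoint (hφc : StrictConvexOn ℝ Set.univ φ) (hφd : Differentiable ℝ φ)
    (hp0 : 0 < p) (hp : p ≤ 1 / 2) {h : ℝ} (hh1 : 1 - p < h) (hh2 : h < 1) :
    discern (twoPoint p) φ Set.univ h 2 = min ((h + p - 1) / p) (1 - h) := by
  have hnn := breg_nonneg hφc hφd
  refine sSup_eq_of_Ico_subset (lt_min (div_pos (by linarith) hp0) (by linarith))
    (fun b ⟨hb0, hbM⟩ => ?_) fun b ⟨hb0, hbh, hgap⟩ => ?_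
  · have hbβ : b * p < h + p - 1 := (lt_div_iff₀ hp0).1 (hbM.trans_le (min_le_left _ _))
    have hb1 : b < 1 - h := hbM.trans_le (min_le_right _ _)
    refine ⟨hb0, le_min (by linarith) hb1.le, fun j hj2 hj2' => ?_⟩
    obtain rfl : j = 2 := le_antisymm hj2' hj2
    have hlow : 1 - p < (h - b) / (1 - b) := by rw [lt_div_iff₀ (by linarith)]; linarith
    rw [optTrim_twoPoint_two_eq_zero hnn hp0.le (by linarith)
      (div_nonneg (by linarith) (by linarith)) ((div_le_one (by linarith)).2 (by linarith)),
      sub_zero]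
    exact optTrim_twoPoint_one_pos hφc hφd hp hlow ((div_le_one (by linarith)).2 (by linarith))
  · have hb1 : b ≤ 1 - h := hbh.trans (min_le_right _ _)
    refine le_min ?_ hb1
    by_contra! hβb
    have hβb : h + p - 1 < b * p := (div_lt_iff₀ hp0).1 hβb
    have hgap := hgap 2 le_rfl le_rfl
    rw [show 2 - 1 = 1 from rfl, optTrim_twoPoint_one_eq_zero hnn
      (div_nonneg (by linarith) (by linarith))
      ((div_le_iff₀ (by linarith)).2 (by linarith))] at hgap
    linarith [optTrim_nonneg (P := twoPoint p) hnn (div_nonneg (by linarith) (by linarith) :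
      0 ≤ h / (1 - b)) Set.univ 2]

theorem trimDistor_Qmix_pair_le (hnn : ∀ x y, 0 ≤ breg φ x y) {h : ℝ} (h0 : 0 < h) (γ N : ℝ) :
    trimDistor (Qmix (twoPoint p) γ N) φ h ![-1, N] ≤ h * breg φ 1 (-1) := by
  refine trimDistor_le_mul hnn h0 (hnn 1 (-1))
    ((ae_Qmix (q := fun x => x = -1 ∨ x = 1 ∨ x = N)
      ((ae_twoPoint p).mono fun x hx => hx.elim Or.inl (Or.inr ∘ Or.inl)) (Or.inr (Or.inr rfl))
      γ).mono fun x hx => ?_)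
  rcases hx with rfl | rfl | rfl
  · exact (bregCode_eq_zero_of_mem_range hnn (x := -1) (c := ![-1, N]) ⟨0, rfl⟩).trans_le
      (hnn 1 (-1))
  · exact bregCode_le 1 ![-1, N] 0
  · exact (bregCode_eq_zero_of_mem_range hnn (x := x) (c := ![-1, x]) ⟨1, rfl⟩).trans_le
      (hnn 1 (-1))

theorem le_trimDistor_Qmix (hnn : ∀ x y, 0 ≤ breg φ x y) (hφm : Measurable φ)
    (hp0 : 0 ≤ p) (hp1 : p ≤ 1) {h : ℝ} (h0 : 0 < h) (hh : h ≤ 1) (γ N : ℝ) {k : ℕ}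
    (c : Fin k → ℝ) :
    (h - max (1 - γ) 0) * bregCode φ N c ≤ trimDistor (Qmix (twoPoint p) γ N) φ h c := by
  obtain ⟨r, hr⟩ := exists_measure_univ_le_bBallc (φ := φ) (c := c) (Set.toFinite {-1, 1, N})
    (ae_Qmix (N := N) ((ae_twoPoint p).mono fun x hx => by rcases hx with rfl | rfl <;> simp)
      (by simp) γ)
  have hmass : ENNReal.ofReal h ≤ Qmix (twoPoint p) γ N Set.univ :=
    calc ENNReal.ofReal h ≤ ENNReal.ofReal ((1 - γ) + γ) := ENNReal.ofReal_le_ofReal (by linarith)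
      _ ≤ ENNReal.ofReal (1 - γ) + ENNReal.ofReal γ := ENNReal.ofReal_add_le
      _ = Qmix (twoPoint p) γ N Set.univ := by simp [Qmix_apply, twoPoint_univ hp0 hp1]
  refine le_trimDistor h0 (subProbC_nonempty hnn (measurable_bregCode hφm c) h0
    ⟨r, hmass.trans hr⟩) fun Q hQP hQ => ?_
  have hQuniv : Q.real Set.univ = h := by simp [measureReal_def, hQ, h0.le]
  have hcompl : (Qmix (twoPoint p) γ N).real {N}ᶜ ≤ max (1 - γ) 0 := by
    rw [measureReal_def, ← ENNReal.toReal_ofReal']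
    refine ENNReal.toReal_mono ENNReal.ofReal_ne_top ?_
    rw [Qmix_apply, Set.indicator_of_notMem (by simp), mul_zero, add_zero]
    refine mul_le_of_le_one_right' ((measure_mono (Set.subset_univ _)).trans ?_)
    rw [twoPoint_univ hp0 hp1]
  have hatom : h - max (1 - γ) 0 ≤ Q.real {N} := by
    linarith [sub_measureReal_compl_le hQP (measurableSet_singleton N)]
  calc (h - max (1 - γ) 0) * bregCode φ N c ≤ Q.real {N} * bregCode φ N c :=
        mul_le_mul_of_nonneg_right hatom (bregCode_nonneg hnn N c)
    _ ≤ ∫ x, bregCode φ x c ∂Q := measureReal_singleton_mul_le_integral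
        (fun x => bregCode_nonneg hnn x c)
        ((integrable_Qmix (integrable_twoPoint p _) γ N).mono_measure hQP) N

theorem trimDistor_Qmix_pair_eq_zero (hnn : ∀ x y, 0 ≤ breg φ x y) (hp0 : 0 < p) (hp1 : p ≤ 1)
    {h : ℝ} (hh1 : 1 - p < h) (hh2 : h ≤ 1) (N : ℝ) :
    trimDistor (Qmix (twoPoint p) ((h + p - 1) / p) N) φ h ![-1, N] = 0 := by
  set γ := (h + p - 1) / p
  have hγ0 : 0 ≤ γ := div_nonneg (by linarith) hp0.le
  have hγ1 : γ ≤ 1 := (div_le_one hp0).2 (by linarith)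
  have hmix : (1 - γ) * (1 - p) + γ = h := by
    simp only [γ]
    field_simp
    ring
  refine trimDistor_eq_zero_of_le_measure_range hnn (by linarith) ?_
  calc ENNReal.ofReal h = ENNReal.ofReal ((1 - γ) * (1 - p)) + ENNReal.ofReal γ := by
        rw [← ENNReal.ofReal_add (mul_nonneg (by linarith) (by linarith)) hγ0, hmix]
    _ = ENNReal.ofReal (1 - γ) * twoPoint p {-1} + ENNReal.ofReal γ * 1 := by
        rw [ENNReal.ofReal_mul (by linarith), twoPoint_singleton_neg_one, mul_one]
    _ ≤ Qmix (twoPoint p) γ N (Set.range ![-1, N]) := by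
        rw [Qmix_apply, Set.indicator_of_mem (show N ∈ Set.range ![-1, N] from ⟨1, rfl⟩),
          Pi.one_apply]
        gcongr
        exact Set.singleton_subset_iff.2 ⟨0, rfl⟩

end TwoPointQuantization

theorem stmt_11 (φ : ℝ → ℝ)
    (hφ : φ = (fun x => x ^ 2) ∨ φ = fun x => Real.exp (-x))
    (p : ℝ) (hp0 : 0 < p) (hp : p ≤ 1 / 2)
    (P : Measure ℝ)
    (hP : P = ENNReal.ofReal (1 - p) • Measure.dirac (-1 : ℝ) +
        ENNReal.ofReal p • Measure.dirac (1 : ℝ))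
    (h : ℝ) (hh1 : 1 - p < h) (hh2 : h < 1) :
    discern P φ Set.univ h 2 = min ((h + p - 1) / p) (1 - h) ∧
    (1 < (1 + p) * h →
      discern P φ Set.univ h 2 = 1 - h ∧
      ∀ γ : ℝ, 1 - h < γ →
        ∀ cb : ℝ → Fin 2 → ℝ,
          (∀ N : ℝ, ∀ c' : Fin 2 → ℝ,
            trimDistor (Qmix P γ N) φ h (cb N) ≤ trimDistor (Qmix P γ N) φ h c') →
          Tendsto (fun N => ⨆ j, ‖cb N j‖) atTop atTop) ∧
    ((1 + p) * h ≤ 1 →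
      discern P φ Set.univ h 2 = (h + p - 1) / p ∧
      ∀ N : ℝ, ∀ c' : Fin 2 → ℝ,
        trimDistor (Qmix P ((h + p - 1) / p) N) φ h ![(-1 : ℝ), N] ≤
          trimDistor (Qmix P ((h + p - 1) / p) N) φ h c') := by
  obtain ⟨hconv, hdiff⟩ : StrictConvexOn ℝ Set.univ φ ∧ Differentiable ℝ φ := by
    rcases hφ with rfl | rfl
    · exact ⟨Even.strictConvexOn_pow even_two two_ne_zero, by fun_prop⟩
    · exact ⟨strictConvexOn_exp_neg, by fun_prop⟩
  have hnn := breg_nonneg hconv hdiff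
  have h0 : 0 < h := by linarith
  obtain rfl : P = twoPoint p := hP
  have hdisc := discern_twoPoint hconv hdiff hp0 hp hh1 hh2
  refine ⟨hdisc, fun hbig => ⟨?_, fun γ hγ cb hopt => ?_⟩, fun hsmall => ⟨?_, fun N c' => ?_⟩⟩
  · rw [hdisc, min_eq_right ((le_div_iff₀ hp0).2 (by nlinarith))]
  · have hε : 0 < h - max (1 - γ) 0 := sub_pos.2 (max_lt (by linarith) h0)
    refine tendsto_iSup_norm_atTop_of_bregCode_le hconv hdiff cb
      (h * breg φ 1 (-1) / (h - max (1 - γ) 0)) fun N => (le_div_iff₀' hε).2 ?_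
    exact (le_trimDistor_Qmix hnn hdiff.continuous.measurable hp0.le (by linarith) h0 hh2.le γ N
      (cb N)).trans ((hopt N _).trans (trimDistor_Qmix_pair_le hnn h0 γ N))
  · rw [hdisc, min_eq_left ((div_le_iff₀ hp0).2 (by nlinarith))]
  · rw [trimDistor_Qmix_pair_eq_zero hnn hp0 (by linarith) hh1 hh2.le N]
    exact trimDistor_nonneg hnn h0.le
end

section
/- Assume φ is C² and F₀ ⊆ int(Ω), where F₀ denotes the closure of the convex hull of the support of P. Then for every h ∈ (0,1) and K > 0, there exists r⁺ < ∞ such that sup{ r_s(c) : c ∈ F₀ ∩ B̄(0,K), s ≤ h } ≤ r⁺. As a consequence, if c ∈ Ω^k is a codebook having a codepoint c_{j₀} ∈ F₀ with ‖c_{j₀}‖ ≤ K, and s ≤ h, then r_s(c) ≤ r⁺. -/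
open MeasureTheory ENNReal Filter Topology
open scoped RealInnerProductSpace BigOperators

noncomputable section

variable {E : Type*} [NormedAddCommGroup E] [InnerProductSpace ℝ E] [CompleteSpace E]
  [MeasurableSpace E] [BorelSpace E]

/-!
On the compact set `C = F₀ ∩ B̄(0, K)` both `φ` and `∇φ` are continuous (`φ` is `C¹` on
`int Ω ⊇ F₀`), so for each `x` the divergence `y ↦ d_φ(x, y)` is bounded on `C` by some `f x`.
The sublevel sets `{f < n}` exhaust the space, so one of them has `P`-mass `> h`. Any codebook
with a codepoint in `C` has Bregman ball of radius `√n` containing that sublevel set, which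
forces `r_s(c) ≤ √n` for every `s ≤ h`.
-/

section Bregman

variable {V : Type*} [NormedAddCommGroup V] [InnerProductSpace ℝ V] [CompleteSpace V]

theorem continuousOn_gradient_of_contDiffOn {φ : V → ℝ} {U : Set V} (hφ : ContDiffOn ℝ 1 φ U)
    (hU : IsOpen U) : ContinuousOn (gradient φ) U :=
  (InnerProductSpace.toDual ℝ V).symm.continuous.comp_continuousOn
    (hφ.continuousOn_fderiv_of_isOpen hU le_rfl)

theorem exists_breg_le_of_isCompact {φ : V → ℝ} {C : Set V} (hC : IsCompact C)
    (hφ : ContinuousOn φ C) (hgrad : ContinuousOn (gradient φ) C) :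
    ∃ f : V → ℝ, ∀ x, ∀ y ∈ C, breg φ x y ≤ f x := by
  have hbdd : ∀ x, BddAbove (breg φ x '' C) := fun x =>
    hC.bddAbove_image <| continuousOn_const.sub hφ |>.sub <|
      hgrad.inner (continuousOn_const.sub continuousOn_id)
  exact ⟨fun x => sSup (breg φ x '' C), fun x y hy => le_csSup (hbdd x) ⟨y, hy, rfl⟩⟩

theorem bregCode_le_breg {k : ℕ} (φ : V → ℝ) (x : V) (c : Fin k → V) (j : Fin k) :
    bregCode φ x c ≤ breg φ x (c j) :=
  ciInf_le (Finite.bddBelow_range _) j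

variable [MeasurableSpace V]

theorem trimRadius_le_of_lt_measure_bBall {k : ℕ} {P : Measure V} {φ : V → ℝ} {s r : ℝ}
    {c : Fin k → V} (hr : 0 ≤ r) (hs : ENNReal.ofReal s < P (bBall φ c r)) :
    trimRadius P φ s c ≤ r := by
  set T := {t : ℝ | 0 ≤ t ∧ P (bBall φ c t) ≤ ENNReal.ofReal s ∧
    ENNReal.ofReal s ≤ P (bBallc φ c t)}
  have hT : ∀ t ∈ T, t ≤ r := by
    rintro t ⟨-, hball, -⟩
    by_contra! hrt
    have hsub : bBall φ c r ⊆ bBall φ c t := fun x (hx : _ < r ^ 2) =>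
      show _ < t ^ 2 from hx.trans (pow_lt_pow_left₀ hrt hr two_ne_zero)
    exact (hs.trans_le (measure_mono hsub)).not_ge hball
  rcases T.eq_empty_or_nonempty with hTe | ⟨t, ht⟩
  · change sInf T ≤ r
    rw [hTe, Real.sInf_empty]
    exact hr
  · exact (csInf_le ⟨0, fun _ hu => hu.1⟩ ht).trans (hT t ht)

end Bregman

theorem exists_nat_lt_measure_setOf_lt {α : Type*} [MeasurableSpace α] (μ : Measure α)
    (g : α → ℝ) {a : ℝ≥0∞} (ha : a < μ Set.univ) : ∃ n : ℕ, a < μ {x | g x < n} := by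
  have hmono : Monotone fun n : ℕ => {x | g x < n} := fun m n hmn x (hx : g x < m) =>
    show g x < n from hx.trans_le (Nat.cast_le.mpr hmn)
  have hunion : ⋃ n : ℕ, {x | g x < n} = Set.univ :=
    Set.eq_univ_of_forall fun x => Set.mem_iUnion.mpr (exists_nat_gt (g x))
  have htend := tendsto_measure_iUnion_atTop (μ := μ) hmono
  rw [hunion] at htend
  exact (htend.eventually (eventually_gt_nhds ha)).exists

theorem stmt_13_general {d k : ℕ}
    (Ω : Set (EuclideanSpace ℝ (Fin d)))
    (φ : EuclideanSpace ℝ (Fin d) → ℝ) (hC2 : ContDiffOn ℝ 2 φ Ω)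
    (P : Measure (EuclideanSpace ℝ (Fin d))) [IsProbabilityMeasure P]
    (hF0 : F0 P ⊆ interior Ω)
    (h : ℝ) (hh1 : h < 1) (K : ℝ) :
    ∃ rp : ℝ,
      (∀ c0 ∈ F0 P ∩ Metric.closedBall (0 : EuclideanSpace ℝ (Fin d)) K, ∀ s : ℝ, 0 < s → s ≤ h →
        trimRadius P φ s (fun _ : Fin 1 => c0) ≤ rp) ∧
      (∀ c : Fin k → EuclideanSpace ℝ (Fin d), ∀ j0 : Fin k, c j0 ∈ F0 P → ‖c j0‖ ≤ K →
        ∀ s : ℝ, 0 < s → s ≤ h → trimRadius P φ s c ≤ rp) := by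
  set C := F0 P ∩ Metric.closedBall 0 K
  have hCΩ : C ⊆ interior Ω := fun y hy => hF0 hy.1
  have hφ : ContDiffOn ℝ 1 φ (interior Ω) := (hC2.mono interior_subset).of_le one_le_two
  obtain ⟨f, hf⟩ := exists_breg_le_of_isCompact
    ((isCompact_closedBall 0 K).inter_left isClosed_closure)
    (hφ.continuousOn.mono hCΩ) ((continuousOn_gradient_of_contDiffOn hφ isOpen_interior).mono hCΩ)
  have hmass : ENNReal.ofReal h < P Set.univ := by simpa using hh1
  obtain ⟨n, hn⟩ := exists_nat_lt_measure_setOf_lt P f hmass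
  have key : ∀ {m : ℕ} (c : Fin m → EuclideanSpace ℝ (Fin d)) (j0 : Fin m), c j0 ∈ C →
      ∀ s ≤ h, trimRadius P φ s c ≤ √n := by
    intro m c j0 hj0 s hs
    refine trimRadius_le_of_lt_measure_bBall (Real.sqrt_nonneg _) ?_
    refine (ENNReal.ofReal_le_ofReal hs).trans_lt (hn.trans_le (measure_mono fun x hx => ?_))
    show bregCode φ x c < √n ^ 2
    rw [Real.sq_sqrt n.cast_nonneg]
    exact ((bregCode_le_breg φ x c j0).trans (hf x _ hj0)).trans_lt hx
  refine ⟨√n, fun c0 hc0 s _ hs => key (fun _ => c0) 0 hc0 s hs, ?_⟩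
  intro c j0 hF hK s _ hs
  exact key c j0 ⟨hF, mem_closedBall_zero_iff.mpr hK⟩ s hs

theorem stmt_13 {d k : ℕ}
    (Ω : Set (EuclideanSpace ℝ (Fin d))) (hΩ : Convex ℝ Ω)
    (φ : EuclideanSpace ℝ (Fin d) → ℝ) (hsc : StrictConvexOn ℝ Ω φ) (hC2 : ContDiffOn ℝ 2 φ Ω)
    (P : Measure (EuclideanSpace ℝ (Fin d))) [IsProbabilityMeasure P] (hsupp : P Ωᶜ = 0)
    (hF0 : F0 P ⊆ interior Ω)
    (h : ℝ) (hh : 0 < h) (hh1 : h < 1) (K : ℝ) (hK : 0 < K) :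
    ∃ rp : ℝ,
      (∀ c0 ∈ F0 P ∩ Metric.closedBall (0 : EuclideanSpace ℝ (Fin d)) K, ∀ s : ℝ, 0 < s → s ≤ h →
        trimRadius P φ s (fun _ : Fin 1 => c0) ≤ rp) ∧
      (∀ c : Fin k → EuclideanSpace ℝ (Fin d), ∀ j0 : Fin k, c j0 ∈ F0 P → ‖c j0‖ ≤ K →
        ∀ s : ℝ, 0 < s → s ≤ h → trimRadius P φ s c ≤ rp) :=
  stmt_13_general Ω φ hC2 P hF0 h hh1 K

end
end

section
/- Assume F₀ ⊆ int(Ω) and φ is C² on Ω, where F₀ denotes the closure of the convex hull of the support of P. Then for every K > 0 there exists C_K > 0 such that for all codebooks c, c' ∈ (B̄(0,K) ∩ F₀)^k and all x ∈ Ω, |d_φ(x, c) − d_φ(x, c')| ≤ C_K · D(c, c') · (1 + ‖x‖), where D(c,c') = min_{σ ∈ Σ_k} max_{1≤j≤k} ‖c_j − c'_{σ(j)}‖ and Σ_k is the set of permutations of {1,…,k}. -/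
open MeasureTheory ENNReal Filter Topology
open scoped RealInnerProductSpace BigOperators

noncomputable section

variable {E : Type*} [NormedAddCommGroup E] [InnerProductSpace ℝ E] [CompleteSpace E]
  [MeasurableSpace E] [BorelSpace E]

/-!
Since `d_φ(x, a) - d_φ(x, b) = φ b - φ a - ⟪∇φ a - ∇φ b, x - a⟫ + ⟪∇φ b, a - b⟫`, and `φ` and `∇φ`
are Lipschitz on the compact convex set `B̄(0, K) ∩ F₀ ⊆ int Ω` (as `φ` is `C²` there), a single
centre moves the divergence by at most `C ‖a - b‖ (1 + ‖x‖)`. For codebooks, relabel `c'` by a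
permutation realising `D(c, c')` and use that a minimum over finitely many indices moves by at
most the largest pointwise change.
-/

lemma abs_iInf_sub_iInf_le {ι : Type*} [Finite ι] {f g : ι → ℝ} {B : ℝ} (hB : 0 ≤ B)
    (h : ∀ i, |f i - g i| ≤ B) : |(⨅ i, f i) - ⨅ i, g i| ≤ B := by
  rcases isEmpty_or_nonempty ι with _ | _
  · simpa [Real.iInf_of_isEmpty] using hB -- both infima are the junk value `0`
  have iInf_le_iInf_add : ∀ f g : ι → ℝ, (∀ i, f i ≤ g i + B) → ⨅ i, f i ≤ (⨅ i, g i) + B := by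
    intro f g hfg
    obtain ⟨j, hj⟩ := Finite.exists_min g
    calc ⨅ i, f i ≤ f j := ciInf_le (Finite.bddBelow_range f) j
      _ ≤ g j + B := hfg j
      _ ≤ (⨅ i, g i) + B := by gcongr; exact le_ciInf hj
  refine abs_sub_le_iff.2 ⟨sub_le_iff_le_add'.2 ?_, sub_le_iff_le_add'.2 ?_⟩
  · exact iInf_le_iInf_add f g fun i => by linarith [abs_sub_le_iff.1 (h i)]
  · exact iInf_le_iInf_add g f fun i => by linarith [abs_sub_le_iff.1 (h i)]

section Codebook

variable {F : Type*} [NormedAddCommGroup F] {k : ℕ}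

lemma dcode_nonneg (c c' : Fin k → F) : 0 ≤ Dcode c c' :=
  Real.iInf_nonneg fun _ => Real.iSup_nonneg fun _ => norm_nonneg _

lemma exists_perm_norm_sub_le_dcode (c c' : Fin k → F) :
    ∃ σ : Equiv.Perm (Fin k), ∀ i, ‖c i - c' (σ i)‖ ≤ Dcode c c' := by
  obtain ⟨σ, hσ⟩ := Finite.exists_min fun σ : Equiv.Perm (Fin k) => ⨆ i, ‖c i - c' (σ i)‖
  exact ⟨σ, fun i => (le_ciSup (Finite.bddAbove_range _) i).trans (le_ciInf hσ)⟩

end Codebook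

section Bregman

variable {F : Type*} [NormedAddCommGroup F] [InnerProductSpace ℝ F] [CompleteSpace F]

lemma ContDiffOn.gradient_of_isOpen {f : F → ℝ} {s : Set F} {m n : WithTop ℕ∞}
    (hf : ContDiffOn ℝ n f s) (hs : IsOpen s) (hmn : m + 1 ≤ n) :
    ContDiffOn ℝ m (gradient f) s :=
  (InnerProductSpace.toDual ℝ F).symm.contDiff.comp_contDiffOn (hf.fderiv_of_isOpen hs hmn)

lemma bregCode_comp_perm {k : ℕ} (φ : F → ℝ) (x : F) (c : Fin k → F) (σ : Equiv.Perm (Fin k)) :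
    bregCode φ x (c ∘ σ) = bregCode φ x c :=
  σ.iInf_comp (g := fun j => breg φ x (c j))

lemma breg_sub_breg (φ : F → ℝ) (x a b : F) :
    breg φ x a - breg φ x b =
      (φ b - φ a) - ⟪gradient φ a - gradient φ b, x - a⟫ + ⟪gradient φ b, a - b⟫ := by
  simp only [breg, inner_sub_left, inner_sub_right]
  ring

lemma abs_breg_sub_breg_le_of_lipschitzOnWith {φ : F → ℝ} {S : Set F} {Lφ Lg : NNReal} {M R : ℝ}
    (hφ : LipschitzOnWith Lφ φ S) (hg : LipschitzOnWith Lg (gradient φ) S)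
    (hM : ∀ b ∈ S, ‖gradient φ b‖ ≤ M) (hR : ∀ a ∈ S, ‖a‖ ≤ R)
    {a b : F} (ha : a ∈ S) (hb : b ∈ S) (x : F) :
    |breg φ x a - breg φ x b| ≤ (Lφ + M + Lg * (R + 1)) * ‖a - b‖ * (1 + ‖x‖) := by
  have hφab : |φ b - φ a| ≤ Lφ * ‖a - b‖ := by
    simpa only [← dist_eq_norm, Real.dist_eq, abs_sub_comm] using hφ.dist_le_mul a ha b hb
  have hgab : ‖gradient φ a - gradient φ b‖ ≤ Lg * ‖a - b‖ := by
    simpa only [← dist_eq_norm] using hg.dist_le_mul a ha b hb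
  have hxa : ‖x - a‖ ≤ ‖x‖ + R := (norm_sub_le x a).trans (by gcongr; exact hR a ha)
  have hM0 : 0 ≤ M := (norm_nonneg _).trans (hM b hb)
  have hR0 : 0 ≤ R := (norm_nonneg _).trans (hR a ha)
  calc |breg φ x a - breg φ x b|
      ≤ |φ b - φ a| + ‖gradient φ a - gradient φ b‖ * ‖x - a‖ + ‖gradient φ b‖ * ‖a - b‖ := by
        rw [breg_sub_breg]
        refine (abs_add_le _ _).trans (add_le_add ((abs_sub _ _).trans ?_) ?_)
        · exact add_le_add le_rfl (abs_real_inner_le_norm _ _)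
        · exact abs_real_inner_le_norm _ _
    _ ≤ Lφ * ‖a - b‖ + Lg * ‖a - b‖ * (‖x‖ + R) + M * ‖a - b‖ := by
        gcongr
        exact hM b hb
    _ ≤ (Lφ + M + Lg * (R + 1)) * ‖a - b‖ * (1 + ‖x‖) := by
        have : 0 ≤ (Lφ + M + Lg * R) * ‖a - b‖ * ‖x‖ + Lg * ‖a - b‖ := by positivity
        linarith

lemma exists_abs_breg_sub_breg_le {φ : F → ℝ} {U S : Set F} (hU : IsOpen U)
    (hφ : ContDiffOn ℝ 2 φ U) (hS : IsCompact S) (hSc : Convex ℝ S) (hSU : S ⊆ U) :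
    ∃ C, 0 < C ∧ ∀ a ∈ S, ∀ b ∈ S, ∀ x,
      |breg φ x a - breg φ x b| ≤ C * ‖a - b‖ * (1 + ‖x‖) := by
  have hgrad : ContDiffOn ℝ 1 (gradient φ) S :=
    (hφ.gradient_of_isOpen hU (by norm_num)).mono hSU
  obtain ⟨Lφ, hLφ⟩ := (hφ.mono hSU).exists_lipschitzOnWith (by norm_num) hSc hS
  obtain ⟨Lg, hLg⟩ := hgrad.exists_lipschitzOnWith one_ne_zero hSc hS
  obtain ⟨M, hM⟩ := hS.exists_bound_of_continuousOn hgrad.continuousOn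
  obtain ⟨R, hR⟩ := hS.isBounded.subset_closedBall 0
  have hR' : ∀ a ∈ S, ‖a‖ ≤ R := fun a ha => mem_closedBall_zero_iff.1 (hR ha)
  refine ⟨Lφ + max M 0 + Lg * (max R 0 + 1) + 1, by positivity, fun a ha b hb x => ?_⟩
  refine (abs_breg_sub_breg_le_of_lipschitzOnWith hLφ hLg
    (fun b hb => (hM b hb).trans (le_max_left M 0)) (fun a ha => (hR' a ha).trans
      (le_max_left R 0)) ha hb x).trans ?_
  gcongr ?_ * _ * _
  linarith

lemma abs_bregCode_sub_bregCode_le {φ : F → ℝ} {S : Set F} {C : ℝ} (hC : 0 ≤ C)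
    (hbreg : ∀ a ∈ S, ∀ b ∈ S, ∀ x, |breg φ x a - breg φ x b| ≤ C * ‖a - b‖ * (1 + ‖x‖))
    {k : ℕ} {c c' : Fin k → F} (hc : ∀ j, c j ∈ S) (hc' : ∀ j, c' j ∈ S) (x : F) :
    |bregCode φ x c - bregCode φ x c'| ≤ C * Dcode c c' * (1 + ‖x‖) := by
  obtain ⟨σ, hσ⟩ := exists_perm_norm_sub_le_dcode c c'
  rw [← bregCode_comp_perm φ x c' σ]
  refine abs_iInf_sub_iInf_le (by have := dcode_nonneg c c'; positivity) fun i => ?_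
  refine (hbreg _ (hc i) _ (hc' (σ i)) x).trans ?_
  gcongr
  exact hσ i

end Bregman

theorem stmt_14_general {d k : ℕ}
    (Ω : Set (EuclideanSpace ℝ (Fin d)))
    (φ : EuclideanSpace ℝ (Fin d) → ℝ) (hC2 : ContDiffOn ℝ 2 φ Ω)
    (P : Measure (EuclideanSpace ℝ (Fin d)))
    (hF0 : F0 P ⊆ interior Ω)
    (K : ℝ) :
    ∃ C : ℝ, 0 < C ∧
      ∀ c c' : Fin k → EuclideanSpace ℝ (Fin d),
        (∀ j, c j ∈ Metric.closedBall (0 : EuclideanSpace ℝ (Fin d)) K ∩ F0 P) →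
        (∀ j, c' j ∈ Metric.closedBall (0 : EuclideanSpace ℝ (Fin d)) K ∩ F0 P) →
        ∀ x ∈ Ω, |bregCode φ x c - bregCode φ x c'| ≤ C * Dcode c c' * (1 + ‖x‖) := by
  obtain ⟨C, hC, hbreg⟩ := exists_abs_breg_sub_breg_le isOpen_interior
    (hC2.mono interior_subset) ((isCompact_closedBall 0 K).inter_right isClosed_closure)
    ((convex_closedBall 0 K).inter (convex_convexHull ℝ _).closure) fun _ hy => hF0 hy.2
  exact ⟨C, hC, fun c c' hc hc' x _ => abs_bregCode_sub_bregCode_le hC.le hbreg hc hc' x⟩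

theorem stmt_14 {d k : ℕ} (hk : 1 ≤ k)
    (Ω : Set (EuclideanSpace ℝ (Fin d))) (hΩ : Convex ℝ Ω)
    (φ : EuclideanSpace ℝ (Fin d) → ℝ) (hsc : StrictConvexOn ℝ Ω φ) (hC2 : ContDiffOn ℝ 2 φ Ω)
    (P : Measure (EuclideanSpace ℝ (Fin d))) [IsProbabilityMeasure P] (hsupp : P Ωᶜ = 0)
    (hF0 : F0 P ⊆ interior Ω)
    (K : ℝ) (hK : 0 < K) :
    ∃ C : ℝ, 0 < C ∧
      ∀ c c' : Fin k → EuclideanSpace ℝ (Fin d),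
        (∀ j, c j ∈ Metric.closedBall (0 : EuclideanSpace ℝ (Fin d)) K ∩ F0 P) →
        (∀ j, c' j ∈ Metric.closedBall (0 : EuclideanSpace ℝ (Fin d)) K ∩ F0 P) →
        ∀ x ∈ Ω, |bregCode φ x c - bregCode φ x c'| ≤ C * Dcode c c' * (1 + ‖x‖) :=
  stmt_14_general Ω φ hC2 P hF0 K

end
end

section
/- Let φ : ℝ^d → ℝ be a strictly convex C¹ function, and consider the class 𝒞 of open Bregman balls B_φ(x, r) = { y ∈ ℝ^d : d_φ(y, x) < r² } (x ∈ ℝ^d, r ≥ 0), and the class 𝒞̄ of closed Bregman balls B̄_φ(x, r) = { y ∈ ℝ^d : d_φ(y, x) ≤ r² }. Then the VC dimension of 𝒞 is at most d + 1, and the VC dimension of 𝒞̄ is at most d + 1; equivalently, no set S ⊆ ℝ^d of cardinality d + 2 is shattered by 𝒞 (i.e., there exists A ⊆ S such that A ≠ S ∩ B for every B ∈ 𝒞), and likewise for 𝒞̄. -/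
open MeasureTheory ENNReal Filter Topology
open scoped RealInnerProductSpace BigOperators

noncomputable section

variable {E : Type*} [NormedAddCommGroup E] [InnerProductSpace ℝ E] [CompleteSpace E]
  [MeasurableSpace E] [BorelSpace E]

/-- Arithmetic helper: a sum of nonpositive terms with one negative term is negative. -/
private lemma vc_sum_neg {α : Type*} (S : Finset α) (f : α → ℝ)
    (hle : ∀ y ∈ S, f y ≤ 0) (hex : ∃ y ∈ S, f y < 0) : ∑ y ∈ S, f y < 0 := by
  have h := Finset.sum_lt_sum hle hex
  simpa using h

/-- From zero-sum nontrivial weights, both signs occur. -/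
private lemma vc_signs {α : Type*} (S : Finset α) (w : α → ℝ)
    (hs0 : ∑ y ∈ S, w y = 0) (hne : ∃ y ∈ S, w y ≠ 0) :
    (∃ y ∈ S, 0 < w y) ∧ (∃ y ∈ S, w y < 0) := by
  obtain ⟨y0, hy0, hw0⟩ := hne
  have H : ∀ v : α → ℝ, (∑ y ∈ S, v y = 0) → v y0 ≠ 0 → ∃ y ∈ S, 0 < v y := by
    intro v hv0 hvy0
    by_contra h
    push_neg at h
    have hlt : ∑ y ∈ S, v y < 0 :=
      vc_sum_neg S v h ⟨y0, hy0, lt_of_le_of_ne (h y0 hy0) hvy0⟩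
    linarith
  constructor
  · exact H w hs0 hw0
  · have hneg : ∑ y ∈ S, -w y = 0 := by
      rw [Finset.sum_neg_distrib, hs0, neg_zero]
    obtain ⟨y, hy, hlt⟩ := H (fun y => -w y) hneg (neg_ne_zero.mpr hw0)
    exact ⟨y, hy, by simpa using hlt⟩

theorem stmt_19 {d : ℕ} (φ : EuclideanSpace ℝ (Fin d) → ℝ)
    (hsc : StrictConvexOn ℝ Set.univ φ) (hC1 : ContDiff ℝ 1 φ) :
    (∀ S : Finset (EuclideanSpace ℝ (Fin d)), S.card = d + 2 →
      ∃ A ⊆ S, ∀ (x : EuclideanSpace ℝ (Fin d)) (r : ℝ), 0 ≤ r →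
        (S : Set (EuclideanSpace ℝ (Fin d))) ∩ {y | breg φ y x < r ^ 2} ≠ (A : Set (EuclideanSpace ℝ (Fin d)))) ∧
    (∀ S : Finset (EuclideanSpace ℝ (Fin d)), S.card = d + 2 →
      ∃ A ⊆ S, ∀ (x : EuclideanSpace ℝ (Fin d)) (r : ℝ), 0 ≤ r →
        (S : Set (EuclideanSpace ℝ (Fin d))) ∩ {y | breg φ y x ≤ r ^ 2} ≠ (A : Set (EuclideanSpace ℝ (Fin d)))) := by
  classical
  have main : ∀ S : Finset (EuclideanSpace ℝ (Fin d)), S.card = d + 2 →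
      ∃ w : EuclideanSpace ℝ (Fin d) → ℝ,
        (∑ y ∈ S, w y • y = 0) ∧ (∑ y ∈ S, w y = 0) ∧ (∃ y ∈ S, w y ≠ 0) := by
    intro S hS
    apply Module.exists_nontrivial_relation_sum_zero_of_finrank_succ_lt_card
    rw [hS, finrank_euclideanSpace_fin]
    omega
  have key : ∀ (S : Finset (EuclideanSpace ℝ (Fin d))) (w : EuclideanSpace ℝ (Fin d) → ℝ),
      (∑ y ∈ S, w y • y = 0) → (∑ y ∈ S, w y = 0) →
      ∀ (x : EuclideanSpace ℝ (Fin d)) (r : ℝ),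
        ∑ y ∈ S, w y * (r ^ 2 - breg φ y x) = -∑ y ∈ S, w y * φ y := by
    intro S w hv hs0 x r
    have h1 : ∑ y ∈ S, w y * ⟪gradient φ x, y⟫ = 0 := by
      have h : (⟪gradient φ x, ∑ y ∈ S, w y • y⟫ : ℝ) = 0 := by rw [hv, inner_zero_right]
      rw [inner_sum] at h
      simp only [real_inner_smul_right] at h
      exact h
    calc ∑ y ∈ S, w y * (r ^ 2 - breg φ y x)
        = ∑ y ∈ S, (w y * (r ^ 2 + φ x - ⟪gradient φ x, x⟫) + w y * ⟪gradient φ x, y⟫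
            - w y * φ y) := by
          refine Finset.sum_congr rfl fun y _ => ?_
          simp only [breg, inner_sub_right]; ring
      _ = (∑ y ∈ S, w y) * (r ^ 2 + φ x - ⟪gradient φ x, x⟫)
            + ∑ y ∈ S, w y * ⟪gradient φ x, y⟫ - ∑ y ∈ S, w y * φ y := by
          rw [Finset.sum_sub_distrib, Finset.sum_add_distrib, Finset.sum_mul]
      _ = -∑ y ∈ S, w y * φ y := by rw [hs0, h1]; ring
  constructor
  · -- open balls
    intro S hS
    obtain ⟨w, hv, hs0, hne⟩ := main S hS
    obtain ⟨hpos, hneg⟩ := vc_signs S w hs0 hne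
    set c : ℝ := -∑ y ∈ S, w y * φ y with hc_def
    rcases le_or_gt 0 c with hc | hc
    · refine ⟨S.filter (fun y => w y < 0), Finset.filter_subset _ _, ?_⟩
      intro x r hr heq
      have hiff : ∀ y ∈ S, (breg φ y x < r ^ 2 ↔ w y < 0) := by
        intro y hy
        have h := Set.ext_iff.mp heq y
        simp only [Set.mem_inter_iff, Finset.mem_coe, Finset.coe_filter, Set.mem_setOf_eq,
          Finset.mem_filter] at h
        constructor
        · intro hb; exact (h.mp ⟨hy, hb⟩).2
        · intro hwy; exact (h.mpr ⟨hy, hwy⟩).2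
      have hsum : ∑ y ∈ S, w y * (r ^ 2 - breg φ y x) < 0 := by
        apply vc_sum_neg
        · intro y hy
          rcases lt_trichotomy (w y) 0 with h | h | h
          · have : 0 < r ^ 2 - breg φ y x := by
              have := (hiff y hy).mpr h; linarith
            nlinarith
          · simp [h]
          · have : ¬ breg φ y x < r ^ 2 := fun hb => absurd ((hiff y hy).mp hb) (by linarith)
            nlinarith [not_lt.mp this]
        · obtain ⟨y0, hy0, hwy0⟩ := hneg
          refine ⟨y0, hy0, ?_⟩
          have : 0 < r ^ 2 - breg φ y0 x := by
            have := (hiff y0 hy0).mpr hwy0; linarith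
          nlinarith
      rw [key S w hv hs0 x r] at hsum
      linarith
    · refine ⟨S.filter (fun y => 0 < w y), Finset.filter_subset _ _, ?_⟩
      intro x r hr heq
      have hiff : ∀ y ∈ S, (breg φ y x < r ^ 2 ↔ 0 < w y) := by
        intro y hy
        have h := Set.ext_iff.mp heq y
        simp only [Set.mem_inter_iff, Finset.mem_coe, Finset.coe_filter, Set.mem_setOf_eq,
          Finset.mem_filter] at h
        constructor
        · intro hb; exact (h.mp ⟨hy, hb⟩).2
        · intro hwy; exact (h.mpr ⟨hy, hwy⟩).2
      have hsum : ∑ y ∈ S, -(w y * (r ^ 2 - breg φ y x)) < 0 := by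
        apply vc_sum_neg
        · intro y hy
          rcases lt_trichotomy (w y) 0 with h | h | h
          · have : ¬ breg φ y x < r ^ 2 := fun hb => absurd ((hiff y hy).mp hb) (by linarith)
            nlinarith [not_lt.mp this]
          · simp [h]
          · have : 0 < r ^ 2 - breg φ y x := by
              have := (hiff y hy).mpr h; linarith
            nlinarith
        · obtain ⟨y0, hy0, hwy0⟩ := hpos
          refine ⟨y0, hy0, ?_⟩
          have : 0 < r ^ 2 - breg φ y0 x := by
            have := (hiff y0 hy0).mpr hwy0; linarith
          nlinarith
      rw [Finset.sum_neg_distrib, key S w hv hs0 x r] at hsum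
      linarith
  · -- closed balls
    intro S hS
    obtain ⟨w, hv, hs0, hne⟩ := main S hS
    obtain ⟨hpos, hneg⟩ := vc_signs S w hs0 hne
    set c : ℝ := -∑ y ∈ S, w y * φ y with hc_def
    rcases le_or_gt 0 c with hc | hc
    · refine ⟨S.filter (fun y => w y < 0), Finset.filter_subset _ _, ?_⟩
      intro x r hr heq
      have hiff : ∀ y ∈ S, (breg φ y x ≤ r ^ 2 ↔ w y < 0) := by
        intro y hy
        have h := Set.ext_iff.mp heq y
        simp only [Set.mem_inter_iff, Finset.mem_coe, Finset.coe_filter, Set.mem_setOf_eq,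
          Finset.mem_filter] at h
        constructor
        · intro hb; exact (h.mp ⟨hy, hb⟩).2
        · intro hwy; exact (h.mpr ⟨hy, hwy⟩).2
      have hsum : ∑ y ∈ S, w y * (r ^ 2 - breg φ y x) < 0 := by
        apply vc_sum_neg
        · intro y hy
          rcases lt_trichotomy (w y) 0 with h | h | h
          · have : 0 ≤ r ^ 2 - breg φ y x := by
              have := (hiff y hy).mpr h; linarith
            nlinarith
          · simp [h]
          · have : ¬ breg φ y x ≤ r ^ 2 := fun hb => absurd ((hiff y hy).mp hb) (by linarith)
            nlinarith [not_le.mp this]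
        · obtain ⟨y0, hy0, hwy0⟩ := hpos
          refine ⟨y0, hy0, ?_⟩
          have : ¬ breg φ y0 x ≤ r ^ 2 := fun hb => absurd ((hiff y0 hy0).mp hb) (by linarith)
          nlinarith [not_le.mp this]
      rw [key S w hv hs0 x r] at hsum
      linarith
    · refine ⟨S.filter (fun y => 0 < w y), Finset.filter_subset _ _, ?_⟩
      intro x r hr heq
      have hiff : ∀ y ∈ S, (breg φ y x ≤ r ^ 2 ↔ 0 < w y) := by
        intro y hy
        have h := Set.ext_iff.mp heq y
        simp only [Set.mem_inter_iff, Finset.mem_coe, Finset.coe_filter, Set.mem_setOf_eq,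
          Finset.mem_filter] at h
        constructor
        · intro hb; exact (h.mp ⟨hy, hb⟩).2
        · intro hwy; exact (h.mpr ⟨hy, hwy⟩).2
      have hsum : ∑ y ∈ S, -(w y * (r ^ 2 - breg φ y x)) < 0 := by
        apply vc_sum_neg
        · intro y hy
          rcases lt_trichotomy (w y) 0 with h | h | h
          · have : ¬ breg φ y x ≤ r ^ 2 := fun hb => absurd ((hiff y hy).mp hb) (by linarith)
            nlinarith [not_le.mp this]
          · simp [h]
          · have : 0 ≤ r ^ 2 - breg φ y x := by
              have := (hiff y hy).mpr h; linarith
            nlinarith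
        · obtain ⟨y0, hy0, hwy0⟩ := hneg
          refine ⟨y0, hy0, ?_⟩
          have : ¬ breg φ y0 x ≤ r ^ 2 := fun hb => absurd ((hiff y0 hy0).mp hb) (by linarith)
          nlinarith [not_le.mp this]
      rw [Finset.sum_neg_distrib, key S w hv hs0 x r] at hsum
      linarith


end
end
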